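/- arXiv:2011.14693 — 4 statements merged into one kernel-verified Lean document; each statement's English description precedes it below -/
import Mathlib

section
/- If Ax = b, then for any y ∈ ℂⁿ the expected squared error of one randomized Kaczmarz step with row-norm probabilities satisfies Σ_{i=1}^m (‖A_(i)‖₂²/‖A‖_F²)·‖K_i(y) − x‖₂² ≤ (1 − λ_min(A^H A)/‖A‖_F²)·‖y − x‖₂². -/
/-- Squared Euclidean 2-norm of a vector in `ℂⁿ`. -/
noncomputable def rnsq {n : ℕ} (v : Fin n → ℂ) : ℝ := ∑ j, ‖v j‖ ^ 2

/-- The Kaczmarz update of `y` with respect to row `i` of `A`. -/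
noncomputable def kacz {m n : ℕ} (A : Matrix (Fin m) (Fin n) ℂ) (b : Fin m → ℂ)
    (i : Fin m) (y : Fin n → ℂ) : Fin n → ℂ :=
  fun j => y j + ((b i - ∑ l, A i l * y l) / ((∑ l, ‖A i l‖ ^ 2 : ℝ) : ℂ)) * (starRingEnd ℂ) (A i j)

/-- The smallest eigenvalue of the Hermitian positive semidefinite matrix `AᴴA`. -/
noncomputable def lamMin {m n : ℕ} (A : Matrix (Fin m) (Fin n) ℂ) : ℝ :=
  ⨅ k : Fin n, (Matrix.isHermitian_conjTranspose_mul_self A).eigenvalues k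

open Matrix in
/-- Rayleigh-type lower bound: `λ_min(AᴴA)·‖e‖² ≤ ‖Ae‖²`. -/
lemma aux_rayleigh {m n : ℕ} (hn : 0 < n) (A : Matrix (Fin m) (Fin n) ℂ)
    (e : EuclideanSpace ℂ (Fin n)) :
    lamMin A * ‖e‖ ^ 2 ≤ ∑ i, ‖(A.mulVec ((WithLp.equiv 2 (Fin n → ℂ)) e)) i‖ ^ 2 := by
  have hne : Nonempty (Fin n) := Fin.pos_iff_nonempty.mp hn
  have hM : (Aᴴ * A).IsHermitian := Matrix.isHermitian_conjTranspose_mul_self A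
  set B := hM.eigenvectorBasis with hB
  set T := Matrix.toEuclideanLin (Aᴴ * A) with hTdef
  have hT : T.IsSymmetric := (Matrix.isHermitian_iff_isSymmetric).1 hM
  set ev : Fin n → ℂ := (WithLp.equiv 2 (Fin n → ℂ)) e with hev
  -- step 1 : the RHS is re ⟪e, T e⟫
  have h1 : (∑ i, ‖(A.mulVec ev) i‖ ^ 2) = RCLike.re (inner ℂ e (T e) : ℂ) := by
    have : (inner ℂ e (T e) : ℂ) = dotProduct (star (A.mulVec ev)) (A.mulVec ev) := by
      rw [hTdef, Matrix.toEuclideanLin_apply, ← Matrix.mulVec_mulVec]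
      rw [PiLp.inner_apply]
      rw [Matrix.star_mulVec, ← dotProduct_mulVec]
      exact Finset.sum_congr rfl fun i _ => by rw [RCLike.inner_apply]; exact mul_comm _ _
    rw [this, dotProduct]
    simp only [Pi.star_apply, RCLike.star_def, RCLike.conj_mul]
    rw [map_sum]
    refine Finset.sum_congr rfl fun i _ => ?_
    rw [← RCLike.ofReal_pow, RCLike.ofReal_re]
  -- step 2 : expand in eigenbasis
  have hTB : ∀ k, T (B k) = ((hM.eigenvalues k : ℝ) : ℂ) • B k := by
    intro k
    have h := hM.mulVec_eigenvectorBasis k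
    rw [hTdef, Matrix.toEuclideanLin_apply]
    ext j
    have hj := congrFun h j
    simp only [Pi.smul_apply] at hj
    simp only [PiLp.smul_apply, smul_eq_mul]
    rw [show (hM.eigenvectorBasis k).ofLp = (B k).ofLp from rfl] at hj
    rw [hj]
    simp [Complex.real_smul]
  have h2 : (inner ℂ e (T e) : ℂ)
      = ∑ k, ((hM.eigenvalues k : ℝ) : ℂ) * ((‖(inner ℂ (B k) e : ℂ)‖ ^ 2 : ℝ) : ℂ) := by
    rw [← B.sum_inner_mul_inner e (T e)]
    refine Finset.sum_congr rfl fun k _ => ?_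
    have hk : (inner ℂ (B k) (T e) : ℂ) = ((hM.eigenvalues k : ℝ) : ℂ) * inner ℂ (B k) e := by
      rw [← hT (B k) e, hTB k, inner_smul_left]
      simp
    rw [hk, ← inner_conj_symm (B k) e, RCLike.norm_conj]
    rw [show (inner ℂ e (B k) : ℂ) * (((hM.eigenvalues k : ℝ) : ℂ) * (starRingEnd ℂ) (inner ℂ e (B k)))
      = ((hM.eigenvalues k : ℝ) : ℂ) * ((inner ℂ e (B k) : ℂ) * (starRingEnd ℂ) (inner ℂ e (B k)))
      from by ring, RCLike.mul_conj, ← RCLike.ofReal_pow]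
    rfl
  -- step 3 : Parseval
  have h3 : ∑ k, ‖(inner ℂ (B k) e : ℂ)‖ ^ 2 = ‖e‖ ^ 2 := by
    have hP := B.sum_inner_mul_inner e e
    have h4 : ∀ k, (inner ℂ e (B k) : ℂ) * inner ℂ (B k) e = ((‖(inner ℂ (B k) e : ℂ)‖ ^ 2 : ℝ) : ℂ) := by
      intro k
      rw [← inner_conj_symm (B k) e, RCLike.norm_conj, RCLike.mul_conj,
        ← RCLike.ofReal_pow]
      rfl
    rw [Finset.sum_congr rfl fun k _ => h4 k] at hP
    have h6 := congrArg Complex.re hP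
    rw [Complex.re_sum] at h6
    simp only [Complex.ofReal_re] at h6
    rw [h6, inner_self_eq_norm_sq_to_K, ← RCLike.ofReal_pow]
    rfl
  rw [h1, h2, map_sum]
  have h5 : ∀ k, RCLike.re (((hM.eigenvalues k : ℝ) : ℂ) * ((‖(inner ℂ (B k) e : ℂ)‖ ^ 2 : ℝ) : ℂ))
      = hM.eigenvalues k * ‖(inner ℂ (B k) e : ℂ)‖ ^ 2 := by
    intro k
    rw [← Complex.ofReal_mul]
    exact Complex.ofReal_re _
  rw [Finset.sum_congr rfl fun k _ => h5 k]
  calc lamMin A * ‖e‖ ^ 2 = ∑ k, lamMin A * ‖(inner ℂ (B k) e : ℂ)‖ ^ 2 := by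
        rw [← Finset.mul_sum, h3]
    _ ≤ ∑ k, hM.eigenvalues k * ‖(inner ℂ (B k) e : ℂ)‖ ^ 2 := by
        refine Finset.sum_le_sum fun k _ => ?_
        have : lamMin A ≤ hM.eigenvalues k := ciInf_le (Finite.bddBelow_range _) k
        exact mul_le_mul_of_nonneg_right this (by positivity)


/-- `rnsq` as a squared Euclidean norm. -/
lemma rnsq_eq {n : ℕ} (v : Fin n → ℂ) :
    rnsq v = ‖(WithLp.equiv 2 (Fin n → ℂ)).symm v‖ ^ 2 := by
  rw [EuclideanSpace.norm_eq, Real.sq_sqrt (Finset.sum_nonneg fun j _ => by positivity)]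
  rfl

/-- If `Ax = b`, then the expected squared error of one randomized Kaczmarz step with
row-norm probabilities satisfies
`Σ_i (‖A_(i)‖₂²/‖A‖_F²)·‖K_i(y) − x‖₂² ≤ (1 − λ_min(AᴴA)/‖A‖_F²)·‖y − x‖₂²`. -/
theorem stmt2 {m n : ℕ} (hn : 0 < n) (A : Matrix (Fin m) (Fin n) ℂ)
    (hrows : ∀ i, A i ≠ 0) (b : Fin m → ℂ)
    (x : Fin n → ℂ) (hx : ∀ i', ∑ l, A i' l * x l = b i') (y : Fin n → ℂ) :
    ∑ i, ((∑ l, ‖A i l‖ ^ 2) / (∑ i', ∑ l, ‖A i' l‖ ^ 2)) *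
        rnsq (fun j => kacz A b i y j - x j) ≤
      (1 - lamMin A / (∑ i', ∑ l, ‖A i' l‖ ^ 2)) * rnsq (fun j => y j - x j) := by
  classical
  have hrnsq_nonneg : ∀ (N : ℕ) (v : Fin N → ℂ), 0 ≤ rnsq v := fun N v =>
    Finset.sum_nonneg fun j _ => by positivity
  rcases Nat.eq_zero_or_pos m with hm | hm
  · subst hm
    simp only [Finset.univ_eq_empty, Finset.sum_empty, div_zero, sub_zero, one_mul]
    exact hrnsq_nonneg _ _
  have hne : Nonempty (Fin m) := Fin.pos_iff_nonempty.mp hm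
  set F : ℝ := ∑ i', ∑ l, ‖A i' l‖ ^ 2 with hFdef
  have hN : ∀ i, 0 < ∑ l, ‖A i l‖ ^ 2 := by
    intro i
    obtain ⟨l, hl⟩ : ∃ l, A i l ≠ 0 := by
      by_contra h
      push_neg at h
      exact hrows i (funext h)
    exact Finset.sum_pos' (fun l _ => by positivity) ⟨l, Finset.mem_univ l, pow_pos (norm_pos_iff.mpr hl) 2⟩
  have hF : 0 < F := Finset.sum_pos (fun i _ => hN i) Finset.univ_nonempty
  set e : EuclideanSpace ℂ (Fin n) := (WithLp.equiv 2 (Fin n → ℂ)).symm (fun j => y j - x j)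
    with he
  have hrne : rnsq (fun j => y j - x j) = ‖e‖ ^ 2 := rnsq_eq _
  -- per-row identity
  have key : ∀ i, rnsq (fun j => kacz A b i y j - x j)
      = ‖e‖ ^ 2 - ‖(∑ l, A i l * (y l - x l))‖ ^ 2 / (∑ l, ‖A i l‖ ^ 2) := by
    intro i
    set N : ℝ := ∑ l, ‖A i l‖ ^ 2 with hNdef
    have hNpos : 0 < N := hN i
    set a : EuclideanSpace ℂ (Fin n) :=
      (WithLp.equiv 2 (Fin n → ℂ)).symm (fun j => (starRingEnd ℂ) (A i j)) with ha
    have hNa : ‖a‖ ^ 2 = N := by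
      rw [EuclideanSpace.norm_eq, Real.sq_sqrt (Finset.sum_nonneg fun j _ => by positivity),
        hNdef]
      exact Finset.sum_congr rfl fun l _ => by
        rw [show a l = (starRingEnd ℂ) (A i l) from rfl, RCLike.norm_conj]
    have hinner : (inner ℂ a e : ℂ) = ∑ l, A i l * (y l - x l) := by
      rw [PiLp.inner_apply]
      refine Finset.sum_congr rfl fun l _ => ?_
      rw [show a l = (starRingEnd ℂ) (A i l) from rfl,
        show e l = y l - x l from rfl, RCLike.inner_apply, Complex.conj_conj, mul_comm]
    set c : ℂ := (inner ℂ a e : ℂ) / (N : ℂ) with hc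
    have hb : b i - ∑ l, A i l * y l = -∑ l, A i l * (y l - x l) := by
      have hterm : ∀ l, A i l * x l - A i l * y l = -(A i l * (y l - x l)) := fun l => by ring
      rw [← hx i, ← Finset.sum_sub_distrib, Finset.sum_congr rfl fun l _ => hterm l,
        Finset.sum_neg_distrib]
    have hvec : (WithLp.equiv 2 (Fin n → ℂ)).symm (fun j => kacz A b i y j - x j)
        = e - c • a := by
      ext j
      have h1 : ((WithLp.equiv 2 (Fin n → ℂ)).symm (fun j => kacz A b i y j - x j)) j
          = kacz A b i y j - x j := rfl
      have h2 : (e - c • a) j = (y j - x j) - c * (starRingEnd ℂ) (A i j) := rfl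
      rw [h1, h2, hc, hinner]
      simp only [kacz]
      rw [hb, ← hNdef]
      ring
    have hz : (inner ℂ e (c • a) : ℂ) = ((‖(inner ℂ a e : ℂ)‖ ^ 2 / N : ℝ) : ℂ) := by
      rw [inner_smul_right, ← inner_conj_symm e a, hc, div_mul_eq_mul_div, RCLike.mul_conj,
        ← RCLike.ofReal_pow, Complex.ofReal_div]
      rfl
    have hre : RCLike.re (inner ℂ e (c • a) : ℂ) = ‖(inner ℂ a e : ℂ)‖ ^ 2 / N := by
      rw [hz]
      exact Complex.ofReal_re _
    have hnorm : ‖c • a‖ ^ 2 = ‖(inner ℂ a e : ℂ)‖ ^ 2 / N := by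
      rw [norm_smul, mul_pow, hNa, hc, norm_div, div_pow,
        show ‖(N : ℂ)‖ = |N| from by rw [Complex.norm_real, Real.norm_eq_abs], abs_of_pos hNpos]
      field_simp
    rw [rnsq_eq, hvec, norm_sub_sq (𝕜 := ℂ), hre, hnorm, ← hinner]
    ring
  rw [Finset.sum_congr rfl fun i _ => by rw [key i]]
  -- sum the per-row identities
  have hsplit : ∀ i, ((∑ l, ‖A i l‖ ^ 2) / F) *
      (‖e‖ ^ 2 - ‖(∑ l, A i l * (y l - x l))‖ ^ 2 / (∑ l, ‖A i l‖ ^ 2))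
      = ((∑ l, ‖A i l‖ ^ 2) * ‖e‖ ^ 2) / F - ‖(∑ l, A i l * (y l - x l))‖ ^ 2 / F := by
    intro i
    have h : ∀ (S N E : ℝ), N ≠ 0 → (N / F) * (E - S / N) = N * E / F - S / F := by
      intro S N E hN0
      field_simp
    exact h _ _ _ (hN i).ne'
  rw [Finset.sum_congr rfl fun i _ => hsplit i, Finset.sum_sub_distrib, ← Finset.sum_div,
    ← Finset.sum_mul, ← hFdef, ← Finset.sum_div]
  have hE : (F * ‖e‖ ^ 2) / F = ‖e‖ ^ 2 := by
    field_simp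
  -- Rayleigh bound
  have hray := aux_rayleigh hn A e
  have hS : ∑ i, ‖(A.mulVec ((WithLp.equiv 2 (Fin n → ℂ)) e)) i‖ ^ 2
      = ∑ i, ‖(∑ l, A i l * (y l - x l))‖ ^ 2 := rfl
  rw [hS] at hray
  rw [hrne]
  have hdiv : lamMin A * ‖e‖ ^ 2 / F ≤ (∑ i, ‖(∑ l, A i l * (y l - x l))‖ ^ 2) / F :=
    (div_le_div_iff_of_pos_right hF).mpr hray
  have hring : (1 - lamMin A / F) * ‖e‖ ^ 2 = ‖e‖ ^ 2 - lamMin A * ‖e‖ ^ 2 / F := by ring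
  linarith [hdiv, hring, hE]
end

section
/- Suppose Ax = b and let y ∈ ℂⁿ have residual r = b − Ay with r_(p) = 0 for some index p. Then max_{1≤j≤m} |r_(j)|²/‖A_(j)‖₂² ≥ ‖r‖₂² / (Σ_{j≠p} ‖A_(j)‖₂²) ≥ (λ_min(A^H A)/γ)·‖y − x‖₂², where γ = max_{1≤i≤m} Σ_{j≠i} ‖A_(j)‖₂². -/
open scoped InnerProductSpace
open Matrix in
lemma key {m n : ℕ} (hn : 0 < n) (A : Matrix (Fin m) (Fin n) ℂ) (v : Fin n → ℂ) :
    lamMin A * ∑ j, ‖v j‖ ^ 2 ≤ ∑ i, ‖A.mulVec v i‖ ^ 2 := by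
  classical
  have hM := Matrix.isHermitian_conjTranspose_mul_self A
  set B := hM.eigenvectorBasis with hB
  set w : EuclideanSpace ℂ (Fin n) := (WithLp.equiv 2 _).symm v with hw
  set T := Matrix.toEuclideanLin (Aᴴ * A) with hT
  have hSym : T.IsSymmetric := Matrix.isHermitian_iff_isSymmetric.mp hM
  have hTB : ∀ i, T (B i) = (hM.eigenvalues i : ℂ) • B i := by
    intro i
    apply PiLp.ext
    intro j
    have h2 := congrFun (hM.mulVec_eigenvectorBasis i) j
    rw [hT, hB, Matrix.toEuclideanLin_apply, WithLp.ofLp_toLp, h2]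
    simp only [PiLp.smul_apply, Pi.smul_apply]
    exact RCLike.real_smul_eq_coe_smul (K := ℂ) _ _
  have hinner : ∀ i, ⟪B i, T w⟫_ℂ = (hM.eigenvalues i : ℂ) * ⟪B i, w⟫_ℂ := by
    intro i
    rw [← hSym (B i) w, hTB i, inner_smul_left]
    simp
  have hTw : ⟪w, T w⟫_ℂ = ∑ i, (hM.eigenvalues i : ℂ) * (‖⟪B i, w⟫_ℂ‖ ^ 2 : ℝ) := by
    rw [← B.sum_inner_mul_inner w (T w)]
    refine Finset.sum_congr rfl fun i _ => ?_
    rw [hinner i]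
    set z := ⟪B i, w⟫_ℂ with hz
    rw [show ⟪w, B i⟫_ℂ = (starRingEnd ℂ) z from by rw [hz, inner_conj_symm]]
    rw [show (starRingEnd ℂ) z * ((hM.eigenvalues i : ℂ) * z)
      = (hM.eigenvalues i : ℂ) * ((starRingEnd ℂ) z * z) by ring]
    rw [RCLike.conj_mul]
    push_cast
    rfl
  have hww : (‖w‖ ^ 2 : ℝ) = ∑ i, ‖⟪B i, w⟫_ℂ‖ ^ 2 := by
    have := B.sum_inner_mul_inner w w
    have h2 : ⟪w, w⟫_ℂ = (‖w‖ : ℂ) ^ 2 := inner_self_eq_norm_sq_to_K w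
    rw [h2] at this
    have : ((∑ i, ‖⟪B i, w⟫_ℂ‖ ^ 2 : ℝ) : ℂ) = ((‖w‖ ^ 2 : ℝ) : ℂ) := by
      push_cast
      rw [← this]
      refine Finset.sum_congr rfl fun i _ => ?_
      set z := ⟪B i, w⟫_ℂ with hz
      rw [show ⟪w, B i⟫_ℂ = (starRingEnd ℂ) z from by rw [hz, inner_conj_symm]]
      rw [RCLike.conj_mul]
      norm_cast
    exact_mod_cast this.symm
  -- norm of w equals norm of v componentwise
  have hwv : (‖w‖ ^ 2 : ℝ) = ∑ j, ‖v j‖ ^ 2 := by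
    rw [EuclideanSpace.norm_eq, Real.sq_sqrt (by positivity)]
    rfl
  -- RHS equals re ⟪w, T w⟫
  have hAv : ∑ i, ‖A.mulVec v i‖ ^ 2 = Complex.re ⟪w, T w⟫_ℂ := by
    have hadj : T = LinearMap.adjoint (Matrix.toEuclideanLin A) ∘ₗ Matrix.toEuclideanLin A := by
      rw [hT, ← Matrix.toEuclideanLin_conjTranspose_eq_adjoint]
      apply LinearMap.ext
      intro u
      apply PiLp.ext
      intro j
      simp [Matrix.toEuclideanLin_apply, ← Matrix.mulVec_mulVec]
    rw [hadj]
    simp only [LinearMap.comp_apply]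
    rw [LinearMap.adjoint_inner_right]
    have : ⟪Matrix.toEuclideanLin A w, Matrix.toEuclideanLin A w⟫_ℂ
        = ((‖Matrix.toEuclideanLin A w‖ : ℂ)) ^ 2 := inner_self_eq_norm_sq_to_K _
    rw [this]
    have hnorm : (‖Matrix.toEuclideanLin A w‖ ^ 2 : ℝ) = ∑ i, ‖A.mulVec v i‖ ^ 2 := by
      rw [EuclideanSpace.norm_eq, Real.sq_sqrt (by positivity)]
      congr 1
    rw [← hnorm]
    norm_cast
  have hlam_le : ∀ i, lamMin A ≤ hM.eigenvalues i := fun i =>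
    ciInf_le (Finite.bddBelow_range _) i
  calc lamMin A * ∑ j, ‖v j‖ ^ 2 = ∑ i, lamMin A * ‖⟪B i, w⟫_ℂ‖ ^ 2 := by
        rw [← hwv, hww, Finset.mul_sum]
    _ ≤ ∑ i, hM.eigenvalues i * ‖⟪B i, w⟫_ℂ‖ ^ 2 := by
        refine Finset.sum_le_sum fun i _ => ?_
        exact mul_le_mul_of_nonneg_right (hlam_le i) (by positivity)
    _ = Complex.re ⟪w, T w⟫_ℂ := by
        rw [hTw]
        push_cast
        rw [Complex.re_sum]
        refine Finset.sum_congr rfl fun i _ => ?_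
        norm_cast
    _ = ∑ i, ‖A.mulVec v i‖ ^ 2 := hAv.symm

/-- Suppose `Ax = b` and let `y ∈ ℂⁿ` have residual `r = b − Ay` with `r_(p) = 0` for
some index `p`. Then
`max_j |r_(j)|²/‖A_(j)‖₂² ≥ ‖r‖₂²/(Σ_{j≠p} ‖A_(j)‖₂²) ≥ (λ_min(AᴴA)/γ)·‖y − x‖₂²`,
where `γ = max_i Σ_{j≠i} ‖A_(j)‖₂²`. -/
theorem stmt6 {m n : ℕ} (hm : 2 ≤ m) (hn : 0 < n) (A : Matrix (Fin m) (Fin n) ℂ)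
    (hrows : ∀ i, A i ≠ 0) (b : Fin m → ℂ)
    (x : Fin n → ℂ) (hx : ∀ i', ∑ l, A i' l * x l = b i')
    (y : Fin n → ℂ) (p : Fin m) (hp : b p - ∑ l, A p l * y l = 0) :
    (∑ j, ‖b j - ∑ l, A j l * y l‖ ^ 2) /
        (∑ j ∈ Finset.univ.erase p, ∑ l, ‖A j l‖ ^ 2) ≤
      Finset.univ.sup' ⟨⟨0, by omega⟩, Finset.mem_univ _⟩
        (fun j => ‖b j - ∑ l, A j l * y l‖ ^ 2 / (∑ l, ‖A j l‖ ^ 2)) ∧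
    (lamMin A /
        Finset.univ.sup' ⟨⟨0, by omega⟩, Finset.mem_univ _⟩
          (fun i => ∑ j ∈ Finset.univ.erase i, ∑ l, ‖A j l‖ ^ 2)) *
        (∑ j, ‖y j - x j‖ ^ 2) ≤
      (∑ j, ‖b j - ∑ l, A j l * y l‖ ^ 2) /
        (∑ j ∈ Finset.univ.erase p, ∑ l, ‖A j l‖ ^ 2) := by
  classical
  have hrowpos : ∀ j, 0 < ∑ l, ‖A j l‖ ^ 2 := by
    intro j
    obtain ⟨l, hl⟩ : ∃ l, A j l ≠ 0 := by
      by_contra h; push_neg at h; exact hrows j (funext h)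
    have h1 : 0 < ‖A j l‖ ^ 2 := pow_pos (norm_pos_iff.mpr hl) 2
    exact h1.trans_le (Finset.single_le_sum (f := fun l => ‖A j l‖ ^ 2)
      (fun i _ => by positivity) (Finset.mem_univ l))
  set S : ℝ := ∑ j ∈ Finset.univ.erase p, ∑ l, ‖A j l‖ ^ 2 with hSdef
  have hS : 0 < S := by
    obtain ⟨q, hq⟩ : ((Finset.univ : Finset (Fin m)).erase p).Nonempty := by
      rw [← Finset.card_pos, Finset.card_erase_of_mem (Finset.mem_univ p)]
      simp [Finset.card_univ]; omega
    exact Finset.sum_pos (fun j _ => hrowpos j) ⟨q, hq⟩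
  have hr : ∀ j, b j - ∑ l, A j l * y l = (A.mulVec (fun l => x l - y l)) j := by
    intro j
    rw [← hx j]
    simp [Matrix.mulVec, dotProduct, mul_sub, Finset.sum_sub_distrib]
  have hrsum : ∑ j, ‖b j - ∑ l, A j l * y l‖ ^ 2
      = ∑ j ∈ Finset.univ.erase p, ‖b j - ∑ l, A j l * y l‖ ^ 2 := by
    rw [Finset.sum_erase _ (by rw [hp]; simp)]
  constructor
  · set M := Finset.univ.sup' ⟨⟨0, by omega⟩, Finset.mem_univ _⟩
        (fun j => ‖b j - ∑ l, A j l * y l‖ ^ 2 / (∑ l, ‖A j l‖ ^ 2)) with hM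
    rw [div_le_iff₀ hS]
    rw [hrsum, hSdef, Finset.mul_sum]
    refine Finset.sum_le_sum fun j _ => ?_
    have h1 : ‖b j - ∑ l, A j l * y l‖ ^ 2 / (∑ l, ‖A j l‖ ^ 2) ≤ M :=
      Finset.le_sup' (f := fun j => ‖b j - ∑ l, A j l * y l‖ ^ 2 / (∑ l, ‖A j l‖ ^ 2))
        (Finset.mem_univ j)
    calc ‖b j - ∑ l, A j l * y l‖ ^ 2
        = (‖b j - ∑ l, A j l * y l‖ ^ 2 / (∑ l, ‖A j l‖ ^ 2)) * (∑ l, ‖A j l‖ ^ 2) := by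
          rw [div_mul_cancel₀ _ (hrowpos j).ne']
      _ ≤ M * (∑ l, ‖A j l‖ ^ 2) :=
          mul_le_mul_of_nonneg_right h1 (hrowpos j).le
  · set γ := Finset.univ.sup' ⟨⟨0, by omega⟩, Finset.mem_univ _⟩
        (fun i => ∑ j ∈ Finset.univ.erase i, ∑ l, ‖A j l‖ ^ 2) with hγ
    have hSγ : S ≤ γ :=
      Finset.le_sup' (f := fun i => ∑ j ∈ Finset.univ.erase i, ∑ l, ‖A j l‖ ^ 2)
        (Finset.mem_univ p)
    haveI : Nonempty (Fin n) := ⟨⟨0, hn⟩⟩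
    have hlam0 : 0 ≤ lamMin A :=
      le_ciInf fun i => Matrix.eigenvalues_conjTranspose_mul_self_nonneg A i
    have ht0 : 0 ≤ ∑ j, ‖y j - x j‖ ^ 2 := Finset.sum_nonneg fun j _ => by positivity
    have hkey : lamMin A * ∑ j, ‖y j - x j‖ ^ 2 ≤ ∑ j, ‖b j - ∑ l, A j l * y l‖ ^ 2 := by
      have := key hn A (fun l => x l - y l)
      calc lamMin A * ∑ j, ‖y j - x j‖ ^ 2
          = lamMin A * ∑ j, ‖x j - y j‖ ^ 2 := by
            congr 1; exact Finset.sum_congr rfl fun j _ => by rw [norm_sub_rev]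
        _ ≤ ∑ i, ‖A.mulVec (fun l => x l - y l) i‖ ^ 2 := this
        _ = ∑ j, ‖b j - ∑ l, A j l * y l‖ ^ 2 :=
            Finset.sum_congr rfl fun j _ => by rw [hr j]
    calc lamMin A / γ * (∑ j, ‖y j - x j‖ ^ 2)
        = lamMin A * (∑ j, ‖y j - x j‖ ^ 2) / γ := by ring
      _ ≤ lamMin A * (∑ j, ‖y j - x j‖ ^ 2) / S :=
          div_le_div_of_nonneg_left ?_ hS hSγ
      _ ≤ (∑ j, ‖b j - ∑ l, A j l * y l‖ ^ 2) / S :=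
          (div_le_div_iff_of_pos_right hS).mpr hkey
    exact mul_nonneg hlam0 ht0
end

section
/- Suppose Ax = b, let Ω ⊆ {1,…,m} be a nonempty set of row indices, let i* ∈ Ω maximize |r_(j)|/‖A_(j)‖₂ over j ∈ Ω where r = b − Ay, and set x' = K_{i*}(y). Then ‖x' − x‖₂² ≤ ‖y − x‖₂² − (Σ_{j∈Ω} |r_(j)|²)/(Σ_{j∈Ω} ‖A_(j)‖₂²). -/
lemma s_pos {m n : ℕ} (A : Matrix (Fin m) (Fin n) ℂ) (hrows : ∀ i, A i ≠ 0) (i : Fin m) :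
    0 < ∑ l, ‖A i l‖ ^ 2 := by
  obtain ⟨l, hl⟩ := Function.ne_iff.mp (hrows i)
  exact Finset.sum_pos' (fun _ _ => by positivity) ⟨l, Finset.mem_univ l, pow_pos (norm_pos_iff.mpr hl) 2⟩

lemma kacz_step {m n : ℕ} (A : Matrix (Fin m) (Fin n) ℂ) (b : Fin m → ℂ) (istar : Fin m)
    (hs : 0 < ∑ l, ‖A istar l‖ ^ 2)
    (x y : Fin n → ℂ) (hx : ∑ l, A istar l * x l = b istar) :
    rnsq (fun j => kacz A b istar y j - x j) =
      rnsq (fun j => y j - x j) -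
        ‖b istar - ∑ l, A istar l * y l‖ ^ 2 / (∑ l, ‖A istar l‖ ^ 2) := by
  set s : ℝ := ∑ l, ‖A istar l‖ ^ 2 with hsdef
  set r : ℂ := b istar - ∑ l, A istar l * y l with hrdef
  set c : ℂ := r / (s : ℂ) with hcdef
  have hsum : ∑ l, A istar l * (y l - x l) = -r := by
    simp only [mul_sub, Finset.sum_sub_distrib, hx, hrdef]
    ring
  have hexp : ∀ j, kacz A b istar y j - x j = (y j - x j) + c * (starRingEnd ℂ) (A istar j) := by
    intro j
    simp only [kacz, hcdef, hrdef, hsdef]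
    ring
  unfold rnsq
  simp only [hexp]
  have h1 : ∀ j : Fin n,
      ‖(y j - x j) + c * (starRingEnd ℂ) (A istar j)‖ ^ 2 =
        ‖y j - x j‖ ^ 2 + Complex.normSq c * ‖A istar j‖ ^ 2 +
          2 * ((starRingEnd ℂ) c * (A istar j * (y j - x j))).re := by
    intro j
    simp only [Complex.sq_norm, Complex.normSq_add, Complex.normSq_mul,
      Complex.normSq_conj, map_mul, Complex.conj_conj]
    congr 2
    congr 1
    ring
  simp only [h1]
  rw [Finset.sum_add_distrib, Finset.sum_add_distrib, ← Finset.mul_sum, ← hsdef]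
  have hcross : ∑ j : Fin n, 2 * ((starRingEnd ℂ) c * (A istar j * (y j - x j))).re
      = 2 * ((starRingEnd ℂ) c * (-r)).re := by
    rw [← Finset.mul_sum, ← Complex.re_sum, ← Finset.mul_sum, hsum]
  rw [hcross]
  have hre : ((starRingEnd ℂ) c * (-r)).re = -(Complex.normSq r / s) := by
    have : (starRingEnd ℂ) c * (-r) = -(((Complex.normSq r / s : ℝ)) : ℂ) := by
      rw [hcdef, map_div₀, Complex.conj_ofReal]
      push_cast
      rw [div_mul_eq_mul_div, mul_neg, mul_comm, Complex.mul_conj]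
      ring
    rw [this]
    simp
  rw [hre]
  have hcns : Complex.normSq c = Complex.normSq r / s ^ 2 := by
    rw [hcdef, Complex.normSq_div, Complex.normSq_ofReal]
    ring_nf
  rw [hcns]
  have hnr : ‖r‖ ^ 2 = Complex.normSq r := by
    rw [Complex.sq_norm]
  rw [hnr]
  field_simp
  ring

/-- One-step bound underlying the PRKS method: if `Ax = b`, `Ω` is a nonempty set of
row indices, `i* ∈ Ω` maximizes `|r_(j)|/‖A_(j)‖₂` over `j ∈ Ω` (with `r = b − Ay`),
and `x' = K_{i*}(y)`, then
`‖x' − x‖₂² ≤ ‖y − x‖₂² − (Σ_{j∈Ω} |r_(j)|²)/(Σ_{j∈Ω} ‖A_(j)‖₂²)`. -/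
theorem stmt12 {m n : ℕ} (A : Matrix (Fin m) (Fin n) ℂ)
    (hrows : ∀ i, A i ≠ 0) (b : Fin m → ℂ)
    (x : Fin n → ℂ) (hx : ∀ i', ∑ l, A i' l * x l = b i')
    (y : Fin n → ℂ) (Ω : Finset (Fin m)) (hΩ : Ω.Nonempty)
    (istar : Fin m) (histarmem : istar ∈ Ω)
    (histar : ∀ j ∈ Ω, ‖b j - ∑ l, A j l * y l‖ / Real.sqrt (∑ l, ‖A j l‖ ^ 2) ≤
      ‖b istar - ∑ l, A istar l * y l‖ / Real.sqrt (∑ l, ‖A istar l‖ ^ 2)) :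
    rnsq (fun j => kacz A b istar y j - x j) ≤
      rnsq (fun j => y j - x j) -
        (∑ j ∈ Ω, ‖b j - ∑ l, A j l * y l‖ ^ 2) / (∑ j ∈ Ω, ∑ l, ‖A j l‖ ^ 2) := by
  set R : Fin m → ℝ := fun j => ‖b j - ∑ l, A j l * y l‖ ^ 2 with hR
  set S : Fin m → ℝ := fun j => ∑ l, ‖A j l‖ ^ 2 with hS
  have hSpos : ∀ j, 0 < S j := fun j => s_pos A hrows j
  have hRnn : ∀ j, 0 ≤ R j := fun j => by positivity
  have hM : ∀ j ∈ Ω, R j / S j ≤ R istar / S istar := by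
    intro j hj
    have h := histar j hj
    have h2 := mul_self_le_mul_self (by positivity) h
    calc R j / S j = (‖b j - ∑ l, A j l * y l‖ / Real.sqrt (S j)) *
          (‖b j - ∑ l, A j l * y l‖ / Real.sqrt (S j)) := by
          rw [div_mul_div_comm, Real.mul_self_sqrt (hSpos j).le, hR]
          ring
      _ ≤ (‖b istar - ∑ l, A istar l * y l‖ / Real.sqrt (S istar)) *
          (‖b istar - ∑ l, A istar l * y l‖ / Real.sqrt (S istar)) := h2
      _ = R istar / S istar := by
          rw [div_mul_div_comm, Real.mul_self_sqrt (hSpos istar).le, hR]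
          ring
  have hsumS : 0 < ∑ j ∈ Ω, S j := Finset.sum_pos (fun j _ => hSpos j) hΩ
  have hratio : (∑ j ∈ Ω, R j) / (∑ j ∈ Ω, S j) ≤ R istar / S istar := by
    rw [div_le_iff₀ hsumS, Finset.mul_sum]
    exact Finset.sum_le_sum fun j hj => (div_le_iff₀ (hSpos j)).mp (hM j hj)
  have hstep := kacz_step A b istar (hSpos istar) x y (hx istar)
  rw [hstep]
  have : (∑ j ∈ Ω, R j) / (∑ j ∈ Ω, S j) ≤ R istar / S istar := hratio
  linarith
end

section
/- Suppose Ax = b and let y ∈ ℂⁿ have residual r = b − Ay with r_(p) = 0 for some index p. Let Ω ⊆ {1,…,m} be a nonempty set of s row indices, let i* ∈ Ω maximize |r_(j)|/‖A_(j)‖₂ over j ∈ Ω, and set x' = K_{i*}(y). Assume there exist ε, ε̃ ≥ 0 with ε < 1 such that (1/s)·Σ_{j∈Ω} |r_(j)|² ≥ ((1−ε)/(m−1))·‖r‖₂² and (1/s)·Σ_{j∈Ω} ‖A_(j)‖₂² ≤ ((1+ε̃)/(m−1))·ξ, where ξ = ‖A‖_F² − ‖A_(s)‖₂² with A_(s)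 a row of A having the second smallest 2-norm. Then ‖x' − x‖₂² ≤ (1 − ((1−ε)/(1+ε̃))·(λ_min(A^H A)/ξ))·‖y − x‖₂². -/
open Matrix in
theorem aux_rayleigh_s14 {n : ℕ} (hn : 0 < n) {H : Matrix (Fin n) (Fin n) ℂ} (hH : H.IsHermitian) (v : Fin n → ℂ) :
    (⨅ k, hH.eigenvalues k) * ∑ j, ‖v j‖ ^ 2 ≤ (star v ⬝ᵥ (H *ᵥ v)).re := by
  have : Nonempty (Fin n) := ⟨⟨0, hn⟩⟩
  set U : Matrix (Fin n) (Fin n) ℂ := (hH.eigenvectorUnitary : Matrix (Fin n) (Fin n) ℂ) with hU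
  set w : Fin n → ℂ := star U *ᵥ v with hw
  have hz : ∀ z : ℂ, (z * star z).re = ‖z‖ ^ 2 := by
    intro z
    rw [Complex.star_def, Complex.mul_conj, Complex.ofReal_re, Complex.normSq_eq_norm_sq]
  have hre : ∀ u : Fin n → ℂ, (star u ⬝ᵥ u).re = ∑ k, ‖u k‖ ^ 2 := by
    intro u
    rw [dotProduct, Complex.re_sum]
    refine Finset.sum_congr rfl fun k _ => ?_
    rw [Pi.star_apply, mul_comm]
    exact hz _
  have hsw : star w = star v ᵥ* U := by
    rw [hw, star_mulVec, Matrix.star_eq_conjTranspose, conjTranspose_conjTranspose]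
  have h1 : star v ⬝ᵥ (H *ᵥ v) =
      star w ⬝ᵥ (Matrix.diagonal (RCLike.ofReal ∘ hH.eigenvalues) *ᵥ w) := by
    conv_lhs => rw [hH.spectral_theorem, Unitary.conjStarAlgAut_apply]
    rw [← hU, ← Matrix.mulVec_mulVec, ← Matrix.mulVec_mulVec, Matrix.dotProduct_mulVec, ← hsw]
  have h2 : (star w ⬝ᵥ (Matrix.diagonal (RCLike.ofReal ∘ hH.eigenvalues) *ᵥ w)).re
      = ∑ k, hH.eigenvalues k * ‖w k‖ ^ 2 := by
    rw [dotProduct, Complex.re_sum]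
    refine Finset.sum_congr rfl fun k _ => ?_
    rw [Matrix.mulVec_diagonal, Pi.star_apply,
      show star (w k) * ((RCLike.ofReal ∘ hH.eigenvalues) k * w k)
        = ((hH.eigenvalues k : ℝ) : ℂ) * (w k * star (w k)) by
          simp only [Function.comp_apply, show (RCLike.ofReal : ℝ → ℂ) = Complex.ofReal from rfl]
          ring,
      Complex.re_ofReal_mul, hz]
  have h3 : ∑ k, ‖w k‖ ^ 2 = ∑ k, ‖v k‖ ^ 2 := by
    rw [← hre, ← hre]
    congr 1
    rw [hsw, hw, Matrix.dotProduct_mulVec, Matrix.vecMul_vecMul,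
      (Matrix.mem_unitaryGroup_iff).mp hH.eigenvectorUnitary.2, Matrix.vecMul_one]
  have h4 : (⨅ k, hH.eigenvalues k) * ∑ k, ‖w k‖ ^ 2 ≤ ∑ k, hH.eigenvalues k * ‖w k‖ ^ 2 := by
    rw [Finset.mul_sum]
    refine Finset.sum_le_sum fun k _ => ?_
    exact mul_le_mul_of_nonneg_right (ciInf_le (Finite.bddBelow_range _) k) (by positivity)
  rw [h1, h2, ← h3]
  exact h4

theorem aux_pyth {n : ℕ} (a : Fin n → ℂ) (u : Fin n → ℂ) (ρ : ℂ)
    (hρ : ∑ l, a l * u l = -ρ)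
    (hN : 0 < ∑ l, ‖a l‖ ^ 2) :
    ∑ j, ‖u j + (ρ / (((∑ l, ‖a l‖ ^ 2 : ℝ)) : ℂ)) * (starRingEnd ℂ) (a j)‖ ^ 2
      = (∑ j, ‖u j‖ ^ 2) - ‖ρ‖ ^ 2 / (∑ l, ‖a l‖ ^ 2) := by
  have hn2 : ∀ z : ℂ, ‖z‖ ^ 2 = Complex.normSq z := by
    intro z; rw [Complex.sq_norm]
  set N : ℝ := ∑ l, ‖a l‖ ^ 2 with hNdef
  have hN0 : N ≠ 0 := ne_of_gt hN
  set c : ℂ := ρ / (N : ℂ) with hc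
  have step : ∀ j, ‖u j + c * (starRingEnd ℂ) (a j)‖ ^ 2
      = Complex.normSq (u j) + Complex.normSq c * Complex.normSq (a j)
        + 2 * ((starRingEnd ℂ) c * (a j * u j)).re := by
    intro j
    have e1 : Complex.normSq (c * (starRingEnd ℂ) (a j))
        = Complex.normSq c * Complex.normSq (a j) := by
      rw [Complex.normSq_mul, Complex.normSq_conj]
    have e2 : u j * (starRingEnd ℂ) (c * (starRingEnd ℂ) (a j))
        = (starRingEnd ℂ) c * (a j * u j) := by
      rw [map_mul, Complex.conj_conj]; ring
    rw [hn2, Complex.normSq_add, e1, e2]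
  simp only [step]
  rw [Finset.sum_add_distrib, Finset.sum_add_distrib, ← Finset.mul_sum]
  have hT3 : ∑ x : Fin n, 2 * ((starRingEnd ℂ) c * (a x * u x)).re
      = 2 * ((starRingEnd ℂ) c * (-ρ)).re := by
    conv_rhs => rw [← hρ, Finset.mul_sum, Complex.re_sum, Finset.mul_sum]
  rw [hT3]
  have h1 : ∑ j, Complex.normSq (u j) = ∑ j, ‖u j‖ ^ 2 :=
    Finset.sum_congr rfl fun j _ => (hn2 _).symm
  have h2 : ∑ j, Complex.normSq (a j) = N := by
    rw [hNdef]; exact Finset.sum_congr rfl fun j _ => (hn2 _).symm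
  have h3 : Complex.normSq c = Complex.normSq ρ / (N * N) := by
    rw [hc, Complex.normSq_div, Complex.normSq_ofReal]
  have h4 : ((starRingEnd ℂ) c * (-ρ)).re = -(Complex.normSq ρ / N) := by
    have e3 : (starRingEnd ℂ) c * (-ρ) = ((-(Complex.normSq ρ / N) : ℝ) : ℂ) := by
      rw [hc, map_div₀, Complex.conj_ofReal,
        show (starRingEnd ℂ) ρ / (N : ℂ) * (-ρ) = -((ρ * (starRingEnd ℂ) ρ) / (N : ℂ)) by ring,
        Complex.mul_conj]
      push_cast
      ring
    rw [e3, Complex.ofReal_re]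
  rw [h1, h2, h3, h4, hn2]
  field_simp
  ring
open Matrix in
theorem aux_lam {m n : ℕ} (hn : 0 < n) (A : Matrix (Fin m) (Fin n) ℂ) (u : Fin n → ℂ) :
    lamMin A * ∑ j, ‖u j‖ ^ 2 ≤ ∑ i, ‖∑ l, A i l * u l‖ ^ 2 := by
  have h := aux_rayleigh_s14 hn (Matrix.isHermitian_conjTranspose_mul_self A) u
  have hre : ∀ (k : ℕ) (w : Fin k → ℂ), (star w ⬝ᵥ w).re = ∑ i, ‖w i‖ ^ 2 := by
    intro k w
    rw [dotProduct, Complex.re_sum]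
    refine Finset.sum_congr rfl fun i _ => ?_
    rw [Pi.star_apply, mul_comm, Complex.star_def, Complex.mul_conj, Complex.ofReal_re,
      Complex.normSq_eq_norm_sq]
  have e : (star u ⬝ᵥ ((Aᴴ * A) *ᵥ u)).re = ∑ i, ‖(A *ᵥ u) i‖ ^ 2 := by
    rw [← Matrix.mulVec_mulVec, Matrix.dotProduct_mulVec, ← Matrix.star_mulVec, hre]
  rw [e] at h
  exact h

/-- Refined one-step bound (3.46) of the PRKS method: if additionally one residual
entry `r_(p)` vanishes and the sampling accuracy assumptions hold with
`ξ = ‖A‖_F² − ‖A_(s)‖₂²` (`A_(s)` a row with the second smallest 2-norm, witnessed by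
a smallest row `t ≠ s`), then
`‖x' − x‖₂² ≤ (1 − ((1−ε)/(1+ε̃))·(λ_min(AᴴA)/ξ))·‖y − x‖₂²`. -/
theorem stmt14 {m n : ℕ} (hm : 2 ≤ m) (hn : 0 < n) (A : Matrix (Fin m) (Fin n) ℂ)
    (hrows : ∀ i, A i ≠ 0) (b : Fin m → ℂ)
    (x : Fin n → ℂ) (hx : ∀ i', ∑ l, A i' l * x l = b i')
    (y : Fin n → ℂ) (p : Fin m) (hp : b p - ∑ l, A p l * y l = 0)
    (Ω : Finset (Fin m)) (hΩ : Ω.Nonempty)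
    (istar : Fin m) (histarmem : istar ∈ Ω)
    (histar : ∀ j ∈ Ω, ‖b j - ∑ l, A j l * y l‖ / Real.sqrt (∑ l, ‖A j l‖ ^ 2) ≤
      ‖b istar - ∑ l, A istar l * y l‖ / Real.sqrt (∑ l, ‖A istar l‖ ^ 2))
    (s : Fin m)
    (hs : ∃ t : Fin m, t ≠ s ∧ (∀ j, (∑ l, ‖A t l‖ ^ 2) ≤ ∑ l, ‖A j l‖ ^ 2) ∧
      (∀ j, j ≠ t → (∑ l, ‖A s l‖ ^ 2) ≤ ∑ l, ‖A j l‖ ^ 2))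
    (ε εt : ℝ) (hε0 : 0 ≤ ε) (hε1 : ε < 1) (hεt0 : 0 ≤ εt)
    (hres : ((1 - ε) / (m - 1 : ℝ)) * ∑ j, ‖b j - ∑ l, A j l * y l‖ ^ 2 ≤
      (1 / (Ω.card : ℝ)) * ∑ j ∈ Ω, ‖b j - ∑ l, A j l * y l‖ ^ 2)
    (hrow : (1 / (Ω.card : ℝ)) * ∑ j ∈ Ω, ∑ l, ‖A j l‖ ^ 2 ≤
      ((1 + εt) / (m - 1 : ℝ)) * ((∑ i, ∑ l, ‖A i l‖ ^ 2) - ∑ l, ‖A s l‖ ^ 2)) :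
    rnsq (fun j => kacz A b istar y j - x j) ≤
      (1 - ((1 - ε) / (1 + εt)) *
          (lamMin A / ((∑ i, ∑ l, ‖A i l‖ ^ 2) - ∑ l, ‖A s l‖ ^ 2))) *
        rnsq (fun j => y j - x j) := by
  -- basic positivity facts
  have hNpos : ∀ j, 0 < ∑ l, ‖A j l‖ ^ 2 := by
    intro j
    obtain ⟨l, hl⟩ := Function.ne_iff.mp (hrows j)
    have h1 : 0 < ‖A j l‖ ^ 2 := pow_pos (norm_pos_iff.mpr hl) 2
    exact lt_of_lt_of_le h1
      (Finset.single_le_sum (f := fun i => ‖A j i‖ ^ 2) (fun i _ => by positivity)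
        (Finset.mem_univ l))
  set N : ℝ := ∑ l, ‖A istar l‖ ^ 2 with hNdef
  have hN : 0 < N := hNpos istar
  set r : Fin m → ℂ := fun j => b j - ∑ l, A j l * y l with hrdef
  set ξ : ℝ := (∑ i, ∑ l, ‖A i l‖ ^ 2) - ∑ l, ‖A s l‖ ^ 2 with hξdef
  have hξ : 0 < ξ := by
    obtain ⟨t, hts, htmin, -⟩ := hs
    have h1 : ∑ l, ‖A s l‖ ^ 2 + ∑ i ∈ Finset.univ.erase s, ∑ l, ‖A i l‖ ^ 2
        = ∑ i, ∑ l, ‖A i l‖ ^ 2 :=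
      Finset.add_sum_erase _ (fun i => ∑ l, ‖A i l‖ ^ 2) (Finset.mem_univ s)
    have h2 : (∑ l, ‖A t l‖ ^ 2) ≤ ∑ i ∈ Finset.univ.erase s, ∑ l, ‖A i l‖ ^ 2 :=
      Finset.single_le_sum (f := fun i => ∑ l, ‖A i l‖ ^ 2)
        (fun i _ => Finset.sum_nonneg fun l _ => by positivity)
        (Finset.mem_erase.mpr ⟨hts, Finset.mem_univ t⟩)
    have := hNpos t
    rw [hξdef]
    linarith
  have hm1 : (0:ℝ) < (m : ℝ) - 1 := by
    have : (2:ℝ) ≤ (m:ℝ) := by exact_mod_cast hm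
    linarith
  have hcard : (0:ℝ) < (Ω.card : ℝ) := by
    exact_mod_cast Finset.card_pos.mpr hΩ
  have hεt1 : (0:ℝ) < 1 + εt := by linarith
  -- residual identity
  have hrxy : ∀ j, ∑ l, A j l * (x l - y l) = r j := by
    intro j
    simp only [mul_sub, Finset.sum_sub_distrib, hx j, hrdef]
  -- Pythagoras step
  set M : ℝ := ‖r istar‖ ^ 2 / N with hMdef
  have hM0 : 0 ≤ M := by positivity
  have key : rnsq (fun j => kacz A b istar y j - x j)
      = rnsq (fun j => y j - x j) - M := by
    have hρ : ∑ l, A istar l * (y l - x l) = -(r istar) := by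
      have := hrxy istar
      rw [show ∑ l, A istar l * (y l - x l) = -∑ l, A istar l * (x l - y l) by
        rw [← Finset.sum_neg_distrib]; exact Finset.sum_congr rfl fun l _ => by ring]
      rw [this]
    have := aux_pyth (fun l => A istar l) (fun l => y l - x l) (r istar) hρ hN
    simp only [rnsq, kacz, hMdef]
    rw [← this]
    refine Finset.sum_congr rfl fun j _ => ?_
    congr 1
    congr 1; simp only [hrdef]; ring
  -- residual lower bound via eigenvalue
  set Q : ℝ := rnsq (fun j => y j - x j) with hQdef
  have hQ0 : 0 ≤ Q := Finset.sum_nonneg fun j _ => by positivity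
  have hlam0 : 0 ≤ lamMin A := by
    have : Nonempty (Fin n) := ⟨⟨0, hn⟩⟩
    exact Real.iInf_nonneg fun k =>
      Matrix.eigenvalues_conjTranspose_mul_self_nonneg A k
  have hRQ : lamMin A * Q ≤ ∑ j, ‖r j‖ ^ 2 := by
    have h := aux_lam hn A (fun l => x l - y l)
    have e1 : ∑ j, ‖x j - y j‖ ^ 2 = Q := by
      rw [hQdef]
      simp only [rnsq]
      exact Finset.sum_congr rfl fun j _ => by rw [norm_sub_rev]
    have e2 : ∑ i, ‖∑ l, A i l * (x l - y l)‖ ^ 2 = ∑ j, ‖r j‖ ^ 2 :=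
      Finset.sum_congr rfl fun i _ => by rw [hrxy i]
    rw [e1, e2] at h
    exact h
  -- max property
  have hmaxj : ∀ j ∈ Ω, ‖r j‖ ^ 2 ≤ M * ∑ l, ‖A j l‖ ^ 2 := by
    intro j hj
    have h := histar j hj
    have hNj := hNpos j
    have hsq : ‖r j‖ ^ 2 / (∑ l, ‖A j l‖ ^ 2) ≤ ‖r istar‖ ^ 2 / N := by
      have h2 := mul_self_le_mul_self (by positivity) h
      calc ‖r j‖ ^ 2 / (∑ l, ‖A j l‖ ^ 2)
          = (‖r j‖ / Real.sqrt (∑ l, ‖A j l‖ ^ 2)) ^ 2 := by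
            rw [div_pow, Real.sq_sqrt (le_of_lt hNj)]
        _ ≤ (‖r istar‖ / Real.sqrt N) ^ 2 := by
            rw [pow_two, pow_two]; exact h2
        _ = ‖r istar‖ ^ 2 / N := by rw [div_pow, Real.sq_sqrt (le_of_lt hN)]
    rw [div_le_iff₀ hNj] at hsq
    calc ‖r j‖ ^ 2 ≤ ‖r istar‖ ^ 2 / N * ∑ l, ‖A j l‖ ^ 2 := hsq
      _ = M * ∑ l, ‖A j l‖ ^ 2 := by rw [hMdef]
  have hSr : ∑ j ∈ Ω, ‖r j‖ ^ 2 ≤ M * ∑ j ∈ Ω, ∑ l, ‖A j l‖ ^ 2 := by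
    rw [Finset.mul_sum]
    exact Finset.sum_le_sum hmaxj
  -- combine
  set SA : ℝ := ∑ j ∈ Ω, ∑ l, ‖A j l‖ ^ 2 with hSAdef
  have hchain : (Ω.card : ℝ) * ((1 - ε) / ((m:ℝ) - 1)) * (lamMin A * Q)
      ≤ M * ((Ω.card : ℝ) * ((1 + εt) / ((m:ℝ) - 1)) * ξ) := by
    have c1 : (Ω.card : ℝ) * ((1 - ε) / ((m:ℝ) - 1)) * (lamMin A * Q)
        ≤ (Ω.card : ℝ) * ((1 - ε) / ((m:ℝ) - 1)) * ∑ j, ‖r j‖ ^ 2 := by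
      refine mul_le_mul_of_nonneg_left hRQ ?_
      exact mul_nonneg hcard.le (div_nonneg (by linarith) hm1.le)
    have c2 : (Ω.card : ℝ) * (((1 - ε) / ((m:ℝ) - 1)) * ∑ j, ‖r j‖ ^ 2)
        ≤ (Ω.card : ℝ) * ((1 / (Ω.card : ℝ)) * ∑ j ∈ Ω, ‖r j‖ ^ 2) :=
      mul_le_mul_of_nonneg_left hres (le_of_lt hcard)
    have c2' : (Ω.card : ℝ) * ((1 / (Ω.card : ℝ)) * ∑ j ∈ Ω, ‖r j‖ ^ 2)
        = ∑ j ∈ Ω, ‖r j‖ ^ 2 := by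
      field_simp
    have c3 : M * SA ≤ M * ((Ω.card : ℝ) * ((1 + εt) / ((m:ℝ) - 1)) * ξ) := by
      refine mul_le_mul_of_nonneg_left ?_ hM0
      have := mul_le_mul_of_nonneg_left hrow (le_of_lt hcard)
      have c4 : (Ω.card : ℝ) * ((1 / (Ω.card : ℝ)) * SA) = SA := by field_simp
      calc SA = (Ω.card : ℝ) * ((1 / (Ω.card : ℝ)) * SA) := c4.symm
        _ ≤ (Ω.card : ℝ) * (((1 + εt) / ((m:ℝ) - 1)) * ξ) := this
        _ = (Ω.card : ℝ) * ((1 + εt) / ((m:ℝ) - 1)) * ξ := by ring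
    calc (Ω.card : ℝ) * ((1 - ε) / ((m:ℝ) - 1)) * (lamMin A * Q)
        ≤ (Ω.card : ℝ) * ((1 - ε) / ((m:ℝ) - 1)) * ∑ j, ‖r j‖ ^ 2 := c1
      _ = (Ω.card : ℝ) * (((1 - ε) / ((m:ℝ) - 1)) * ∑ j, ‖r j‖ ^ 2) := by ring
      _ ≤ ∑ j ∈ Ω, ‖r j‖ ^ 2 := c2.trans_eq c2'
      _ ≤ M * SA := hSr
      _ ≤ M * ((Ω.card : ℝ) * ((1 + εt) / ((m:ℝ) - 1)) * ξ) := c3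
  have hMC : ((1 - ε) / (1 + εt)) * (lamMin A / ξ) * Q ≤ M := by
    have hD : (0:ℝ) < (Ω.card : ℝ) * ((1 + εt) / ((m:ℝ) - 1)) * ξ :=
      mul_pos (mul_pos hcard (div_pos hεt1 hm1)) hξ
    rw [show ((1 - ε) / (1 + εt)) * (lamMin A / ξ) * Q
        = ((Ω.card : ℝ) * ((1 - ε) / ((m:ℝ) - 1)) * (lamMin A * Q))
          / ((Ω.card : ℝ) * ((1 + εt) / ((m:ℝ) - 1)) * ξ) by
      field_simp]
    exact (div_le_iff₀ hD).mpr hchain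
  rw [key]
  have : (1 - ((1 - ε) / (1 + εt)) * (lamMin A / ξ)) * Q
      = Q - ((1 - ε) / (1 + εt)) * (lamMin A / ξ) * Q := by ring
  rw [hQdef] at this ⊢
  rw [this]
  linarith [hMC]
end
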